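/- Let k and N be natural numbers, let (R_w, m_w) be local rings whose maximal ideals are each generated by at most N elements and which each have k-bounded multiplication, and let (R, m) be their ultraproduct with respect to an ultrafilter 𝒰 on the infinite set W. Then the separated quotient R̃ := R/⋂_{n≥1} mⁿ has k-bounded multiplication and is an integral domain. -/

import Mathlib

/-! `k`-bounded multiplication only refers to the `m`-adic filtration: it says that
`a ∉ m ^ (d + 1)` and `b ∉ m ^ (e + 1)` force `a * b ∉ m ^ (k * max d e + 1)`.
When the maximal ideals `m_w` are generated by a fixed finite number of elements, an element
`f_w ∈ m_w ^ (n + 1)` can be written as `∑ i, c_{w,i} * x_{w,i}` with `c_{w,i} ∈ m_w ^ n` and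
the same index set for all `w`; by induction on `n` this gives the Łoś-type statement
`[f] ∈ m ^ n ↔ f_w ∈ m_w ^ n` for almost all `w`. Hence the filtration condition passes to the
ultraproduct, and then to its quotient by `⋂ₙ mⁿ`, which has the same filtration. The same
condition shows that `⋂ₙ mⁿ` is prime: if neither `a` nor `b` lies in every `mⁿ`, neither
does `a * b`. -/

/-- The ideal of the product ring consisting of families that vanish almost
everywhere with respect to the ultrafilter `𝒰`. -/
def almostZero {W : Type*} (𝒰 : Ultrafilter W) (R : W → Type*) [∀ w, CommRing (R w)] :
    Ideal (∀ w, R w) where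
  carrier := {f | ∀ᶠ w in (𝒰 : Filter W), f w = 0}
  zero_mem' := Filter.Eventually.of_forall fun _ => rfl
  add_mem' := by
    intro f g hf hg
    filter_upwards [hf, hg] with w h1 h2
    simp [h1, h2]
  smul_mem' := by
    intro c f hf
    filter_upwards [hf] with w h
    simp [h]

/-- The ultraproduct of a family of commutative rings with respect to an
ultrafilter: the product modulo the ideal of almost-everywhere-zero families. -/
abbrev Ultraproduct {W : Type*} (𝒰 : Ultrafilter W) (R : W → Type*) [∀ w, CommRing (R w)] :
    Type _ :=
  (∀ w, R w) ⧸ almostZero 𝒰 R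

theorem isUnit_mk_iff {W : Type*} (𝒰 : Ultrafilter W) (R : W → Type*) [∀ w, CommRing (R w)]
    (f : ∀ w, R w) :
    IsUnit (Ideal.Quotient.mk (almostZero 𝒰 R) f) ↔ ∀ᶠ w in (𝒰 : Filter W), IsUnit (f w) := by
  constructor
  · rintro ⟨u, hu⟩
    obtain ⟨g, hg⟩ := Ideal.Quotient.mk_surjective (↑u⁻¹ : Ultraproduct 𝒰 R)
    have h1 : Ideal.Quotient.mk (almostZero 𝒰 R) (f * g) =
        Ideal.Quotient.mk (almostZero 𝒰 R) 1 := by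
      rw [map_mul, map_one, hg, ← hu, Units.mul_inv]
    have h2 : f * g - 1 ∈ almostZero 𝒰 R := Ideal.Quotient.eq.mp h1
    filter_upwards [h2] with w hw
    have : f w * g w = 1 := by
      have : f w * g w - 1 = 0 := hw
      linear_combination this
    exact isUnit_iff_exists_inv.mpr ⟨_, this⟩
  · intro hf
    classical
    set g : ∀ w, R w := fun w => if h : IsUnit (f w) then ((h.unit⁻¹ : (R w)ˣ) : R w) else 0
      with hgdef
    have h1 : f * g - 1 ∈ almostZero 𝒰 R := by
      filter_upwards [hf] with w hw
      have : f w * g w = 1 := by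
        simp only [hgdef, dif_pos hw]
        exact hw.mul_val_inv
      show f w * g w - 1 = 0
      rw [this, sub_self]
    have h2 : Ideal.Quotient.mk (almostZero 𝒰 R) f *
        Ideal.Quotient.mk (almostZero 𝒰 R) g = 1 := by
      rw [← map_mul, ← map_one (Ideal.Quotient.mk (almostZero 𝒰 R))]
      exact Ideal.Quotient.eq.mpr h1
    exact isUnit_iff_exists_inv.mpr ⟨_, h2⟩

instance {W : Type*} (𝒰 : Ultrafilter W) (R : W → Type*) [∀ w, CommRing (R w)]
    [∀ w, Nontrivial (R w)] : Nontrivial (Ultraproduct 𝒰 R) := by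
  refine ⟨0, 1, fun h => ?_⟩
  have h1 : (0 : ∀ w, R w) - 1 ∈ almostZero 𝒰 R := Ideal.Quotient.eq.mp h
  have h2 : ∀ᶠ w in (𝒰 : Filter W), (0 : R w) - 1 = 0 := h1
  obtain ⟨w, hw⟩ := h2.exists
  exact one_ne_zero (by linear_combination -hw)

instance {W : Type*} (𝒰 : Ultrafilter W) (R : W → Type*) [∀ w, CommRing (R w)]
    [∀ w, IsLocalRing (R w)] : IsLocalRing (Ultraproduct 𝒰 R) := by
  refine IsLocalRing.of_nonunits_add ?_
  intro a b ha hb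
  obtain ⟨f, rfl⟩ := Ideal.Quotient.mk_surjective a
  obtain ⟨g, rfl⟩ := Ideal.Quotient.mk_surjective b
  rw [mem_nonunits_iff, isUnit_mk_iff, ← Ultrafilter.eventually_not] at ha hb
  rw [mem_nonunits_iff, ← map_add, isUnit_mk_iff, ← Ultrafilter.eventually_not]
  filter_upwards [ha, hb] with w h1 h2
  exact fun h => (IsLocalRing.nonunits_add h1 h2) h

/-- The ideal of infinitesimals of a local ring: the intersection of all powers
of the maximal ideal. -/
def infinitesimals (A : Type*) [CommRing A] [IsLocalRing A] : Ideal A :=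
  ⨅ n : ℕ, IsLocalRing.maximalIdeal A ^ (n + 1)

/-- The order of an element with respect to an ideal: the supremum of all `n`
with `a ∈ m ^ n`. -/
noncomputable def ordIdeal {A : Type*} [CommRing A] (m : Ideal A) (a : A) : ℕ∞ :=
  sSup ((fun n : ℕ => (n : ℕ∞)) '' {n : ℕ | a ∈ m ^ n})

/-- A ring has `k`-bounded multiplication with respect to an ideal `m` if
`ord (a * b) ≤ k * max (ord a) (ord b)` whenever the right-hand side is finite. -/
def KBoundedMul {A : Type*} [CommRing A] (m : Ideal A) (k : ℕ) : Prop :=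
  ∀ a b : A, ordIdeal m a ≠ ⊤ → ordIdeal m b ≠ ⊤ →
    ordIdeal m (a * b) ≤ (k : ℕ∞) * max (ordIdeal m a) (ordIdeal m b)

section Order

variable {A : Type*} [CommRing A] {m : Ideal A} {a : A} {n : ℕ}

lemma le_ordIdeal_of_mem (h : a ∈ m ^ n) : (n : ℕ∞) ≤ ordIdeal m a :=
  le_sSup ⟨n, h, rfl⟩

lemma ordIdeal_le_of_notMem (h : a ∉ m ^ (n + 1)) : ordIdeal m a ≤ n :=
  sSup_le <| by
    rintro _ ⟨j, hj, rfl⟩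
    exact Nat.cast_le.2 <| not_lt.1 fun hnj => h (Ideal.pow_le_pow_right hnj hj)

lemma notMem_pow_succ_of_ordIdeal_eq (h : ordIdeal m a = n) : a ∉ m ^ (n + 1) := fun ha => by
  have := le_ordIdeal_of_mem ha
  rw [h, Nat.cast_le] at this
  omega

theorem kBoundedMul_iff {k : ℕ} : KBoundedMul m k ↔ ∀ (a b : A) (d e : ℕ),
    a ∉ m ^ (d + 1) → b ∉ m ^ (e + 1) → a * b ∉ m ^ (k * max d e + 1) := by
  constructor
  · intro h a b d e ha hb hab
    have hda := ordIdeal_le_of_notMem ha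
    have heb := ordIdeal_le_of_notMem hb
    have := (le_ordIdeal_of_mem hab).trans <|
      (h a b (ne_top_of_le_ne_top (ENat.natCast_ne_top d) hda)
        (ne_top_of_le_ne_top (ENat.natCast_ne_top e) heb)).trans
        (by rw [Nat.cast_mul, Nat.mono_cast.map_max]; gcongr :
          (k : ℕ∞) * max (ordIdeal m a) (ordIdeal m b) ≤ (k * max d e : ℕ))
    exact absurd (Nat.cast_le.1 this) (Nat.not_succ_le_self _)
  · intro h a b ha hb
    obtain ⟨d, hd⟩ := ENat.ne_top_iff_exists.1 ha
    obtain ⟨e, he⟩ := ENat.ne_top_iff_exists.1 hb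
    rw [← hd, ← he, ← Nat.mono_cast.map_max, ← Nat.cast_mul]
    exact ordIdeal_le_of_notMem <|
      h a b d e (notMem_pow_succ_of_ordIdeal_eq hd.symm) (notMem_pow_succ_of_ordIdeal_eq he.symm)

end Order

section SeparatedQuotient

open IsLocalRing

variable {A : Type*} [CommRing A] [IsLocalRing A]

lemma infinitesimals_le_pow (n : ℕ) : infinitesimals A ≤ maximalIdeal A ^ n :=
  (iInf_le _ n).trans (Ideal.pow_le_pow_right n.le_succ)

theorem KBoundedMul.isPrime_infinitesimals {k : ℕ} (h : KBoundedMul (maximalIdeal A) k) :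
    (infinitesimals A).IsPrime := by
  refine Ideal.isPrime_iff.2 ⟨fun htop => ?_, fun {a b} hab => ?_⟩
  · have := infinitesimals_le_pow (A := A) 1
    rw [htop, pow_one, top_le_iff] at this
    exact (maximalIdeal.isMaximal A).ne_top this
  · by_contra! hne
    simp only [infinitesimals, Ideal.mem_iInf, not_forall] at hne hab
    obtain ⟨⟨d, hd⟩, ⟨e, he⟩⟩ := hne
    exact kBoundedMul_iff.1 h a b d e hd he (hab _)

lemma map_mk_maximalIdeal (I : Ideal A) [IsLocalRing (A ⧸ I)] :
    (maximalIdeal A).map (Ideal.Quotient.mk I) = maximalIdeal (A ⧸ I) := by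
  have := IsLocalHom.of_surjective (Ideal.Quotient.mk I) Ideal.Quotient.mk_surjective
  rw [← maximalIdeal_comap (Ideal.Quotient.mk I),
    Ideal.map_comap_of_surjective _ Ideal.Quotient.mk_surjective]

lemma mk_mem_maximalIdeal_pow_iff {I : Ideal A} [IsLocalRing (A ⧸ I)] {n : ℕ}
    (hI : I ≤ maximalIdeal A ^ n) (a : A) :
    Ideal.Quotient.mk I a ∈ maximalIdeal (A ⧸ I) ^ n ↔ a ∈ maximalIdeal A ^ n := by
  rw [← map_mk_maximalIdeal, ← Ideal.map_pow, Ideal.mem_quotient_iff_mem hI]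

theorem KBoundedMul.quotient {k : ℕ} (h : KBoundedMul (maximalIdeal A) k) {I : Ideal A}
    [IsLocalRing (A ⧸ I)] (hI : I ≤ infinitesimals A) : KBoundedMul (maximalIdeal (A ⧸ I)) k := by
  have hmem (a : A) (n : ℕ) := mk_mem_maximalIdeal_pow_iff (hI.trans (infinitesimals_le_pow n)) a
  refine kBoundedMul_iff.2 fun a b d e ha hb => ?_
  obtain ⟨a, rfl⟩ := Ideal.Quotient.mk_surjective a
  obtain ⟨b, rfl⟩ := Ideal.Quotient.mk_surjective b
  rw [hmem] at ha hb
  rw [← map_mul, hmem]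
  exact kBoundedMul_iff.1 h a b d e ha hb

end SeparatedQuotient

namespace Ideal

lemma exists_sum_mul_eq_of_mem_mul_span {A ι : Type*} [CommSemiring A] [Fintype ι]
    {I : Ideal A} {x : ι → A} {y : A} (hy : y ∈ I * span (Set.range x)) :
    ∃ c : ι → A, (∀ i, c i ∈ I) ∧ ∑ i, c i * x i = y := by
  obtain ⟨c, hc, rfl⟩ := (Submodule.mem_ideal_smul_span_iff_exists_sum I x y).1 hy
  exact ⟨c, hc, by simp [Finsupp.sum_fintype]⟩

def eventuallyPi {W : Type*} (l : Filter W) {R : W → Type*} [∀ w, CommSemiring (R w)]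
    (I : ∀ w, Ideal (R w)) : Ideal (∀ w, R w) where
  carrier := {f | ∀ᶠ w in l, f w ∈ I w}
  zero_mem' := .of_forall fun w => (I w).zero_mem
  add_mem' hf hg := (hf.and hg).mono fun w h => (I w).add_mem h.1 h.2
  smul_mem' c _ hf := hf.mono fun w h => (I w).mul_mem_left (c w) h

variable {W : Type*} {l : Filter W} {R : W → Type*} [∀ w, CommSemiring (R w)]

lemma mem_eventuallyPi {I : ∀ w, Ideal (R w)} {f : ∀ w, R w} :
    f ∈ eventuallyPi l I ↔ ∀ᶠ w in l, f w ∈ I w :=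
  Iff.rfl

lemma eventuallyPi_mul_le (I J : ∀ w, Ideal (R w)) :
    eventuallyPi l I * eventuallyPi l J ≤ eventuallyPi l fun w => I w * J w :=
  mul_le.2 fun _ hf _ hg => (hf.and hg).mono fun _ h => mul_mem_mul h.1 h.2

lemma eventuallyPi_pow_le (I : ∀ w, Ideal (R w)) (n : ℕ) :
    eventuallyPi l I ^ n ≤ eventuallyPi l fun w => I w ^ n := by
  induction n with
  | zero => exact fun f _ => .of_forall fun w => by simp
  | succ n ih =>
    simp_rw [pow_succ]
    exact (mul_mono_left ih).trans (eventuallyPi_mul_le _ _)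

end Ideal

namespace Ultraproduct

open IsLocalRing

variable {W : Type*} (𝒰 : Ultrafilter W) {R : W → Type*} [∀ w, CommRing (R w)]

local notation "π" => Ideal.Quotient.mk (almostZero 𝒰 R)

lemma mk_eq_mk_of_eventually_eq {f g : ∀ w, R w} (h : ∀ᶠ w in (𝒰 : Filter W), f w = g w) :
    π f = π g :=
  Ideal.Quotient.eq.2 <| h.mono fun _ hw => sub_eq_zero.2 hw

lemma almostZero_le_eventuallyPi (I : ∀ w, Ideal (R w)) :
    almostZero 𝒰 R ≤ Ideal.eventuallyPi 𝒰 I :=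
  fun _ hf => hf.mono fun w hw => hw ▸ (I w).zero_mem

variable [∀ w, IsLocalRing (R w)]

lemma maximalIdeal_eq_map :
    maximalIdeal (Ultraproduct 𝒰 R) =
      (Ideal.eventuallyPi 𝒰 fun w => maximalIdeal (R w)).map π := by
  ext y
  obtain ⟨f, rfl⟩ := Ideal.Quotient.mk_surjective y
  rw [Ideal.mem_quotient_iff_mem (almostZero_le_eventuallyPi 𝒰 _), Ideal.mem_eventuallyPi,
    mem_maximalIdeal, mem_nonunits_iff, isUnit_mk_iff, ← Ultrafilter.eventually_not]
  rfl

lemma eventually_mem_pow_of_mk_mem_pow {n : ℕ} {f : ∀ w, R w}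
    (hf : π f ∈ maximalIdeal (Ultraproduct 𝒰 R) ^ n) :
    ∀ᶠ w in (𝒰 : Filter W), f w ∈ maximalIdeal (R w) ^ n := by
  rw [maximalIdeal_eq_map, ← Ideal.map_pow] at hf
  have := Ideal.map_mono (Ideal.eventuallyPi_pow_le (fun w => maximalIdeal (R w)) n) hf
  rwa [Ideal.mem_quotient_iff_mem (almostZero_le_eventuallyPi 𝒰 _)] at this

lemma mk_mem_pow_of_eventually_mem_pow {ι : Type*} [Fintype ι]
    (hgen : ∀ w, ∃ x : ι → R w, Ideal.span (Set.range x) = maximalIdeal (R w))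
    {n : ℕ} {f : ∀ w, R w} (hf : ∀ᶠ w in (𝒰 : Filter W), f w ∈ maximalIdeal (R w) ^ n) :
    π f ∈ maximalIdeal (Ultraproduct 𝒰 R) ^ n := by
  choose x hx using hgen
  induction n generalizing f with
  | zero => simp
  | succ n ih =>
    have hcoeff (w : W) : ∃ c : ι → R w, f w ∈ maximalIdeal (R w) ^ (n + 1) →
        (∀ i, c i ∈ maximalIdeal (R w) ^ n) ∧ ∑ i, c i * x w i = f w := by
      by_cases hw : f w ∈ maximalIdeal (R w) ^ (n + 1)
      · rw [pow_succ] at hw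
        nth_rw 2 [← hx w] at hw
        exact (Ideal.exists_sum_mul_eq_of_mem_mul_span hw).imp fun _ hc _ => hc
      · exact ⟨0, fun h => absurd h hw⟩
    choose c hc using hcoeff
    -- the index set `ι` of the coefficients does not depend on `w`, so the sum descends to `π`
    have hsum : π f = ∑ i, π (fun w => c w i) * π (fun w => x w i) := by
      simp only [← map_mul, ← map_sum]
      refine mk_eq_mk_of_eventually_eq 𝒰 (hf.mono fun w hw => ?_)
      simp [Finset.sum_apply, (hc w hw).2]
    rw [hsum, pow_succ]
    refine Ideal.sum_mem _ fun i _ => Ideal.mul_mem_mul (ih (hf.mono fun w hw => (hc w hw).1 i)) ?_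
    rw [maximalIdeal_eq_map]
    exact Ideal.mem_map_of_mem _ (.of_forall fun w => (hx w).le (Ideal.subset_span ⟨i, rfl⟩))

lemma mk_mem_maximalIdeal_pow_iff {ι : Type*} [Fintype ι]
    (hgen : ∀ w, ∃ x : ι → R w, Ideal.span (Set.range x) = maximalIdeal (R w))
    (n : ℕ) (f : ∀ w, R w) :
    π f ∈ maximalIdeal (Ultraproduct 𝒰 R) ^ n ↔
      ∀ᶠ w in (𝒰 : Filter W), f w ∈ maximalIdeal (R w) ^ n :=
  ⟨eventually_mem_pow_of_mk_mem_pow 𝒰, mk_mem_pow_of_eventually_mem_pow 𝒰 hgen⟩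

theorem kBoundedMul_maximalIdeal {ι : Type*} [Fintype ι] {k : ℕ}
    (hgen : ∀ w, ∃ x : ι → R w, Ideal.span (Set.range x) = maximalIdeal (R w))
    (hk : ∀ w, KBoundedMul (maximalIdeal (R w)) k) :
    KBoundedMul (maximalIdeal (Ultraproduct 𝒰 R)) k := by
  refine kBoundedMul_iff.2 fun a b d e ha hb => ?_
  obtain ⟨f, rfl⟩ := Ideal.Quotient.mk_surjective a
  obtain ⟨g, rfl⟩ := Ideal.Quotient.mk_surjective b
  rw [mk_mem_maximalIdeal_pow_iff 𝒰 hgen, ← Ultrafilter.eventually_not] at ha hb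
  rw [← map_mul, mk_mem_maximalIdeal_pow_iff 𝒰 hgen, ← Ultrafilter.eventually_not]
  filter_upwards [ha, hb] with w hfw hgw using kBoundedMul_iff.1 (hk w) _ _ d e hfw hgw

end Ultraproduct

theorem stmt_19_general (k N : ℕ) {W : Type*} (𝒰 : Ultrafilter W)
    (R : W → Type*) [∀ w, CommRing (R w)] [∀ w, IsLocalRing (R w)]
    (hgen : ∀ w, ∃ x : Fin N → R w,
      Ideal.span (Set.range x) = IsLocalRing.maximalIdeal (R w))
    (hk : ∀ w, KBoundedMul (IsLocalRing.maximalIdeal (R w)) k) :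
    ∃ h : IsLocalRing (Ultraproduct 𝒰 R ⧸ infinitesimals (Ultraproduct 𝒰 R)),
      KBoundedMul (@IsLocalRing.maximalIdeal _ _ h) k ∧
      IsDomain (Ultraproduct 𝒰 R ⧸ infinitesimals (Ultraproduct 𝒰 R)) := by
  have hU := Ultraproduct.kBoundedMul_maximalIdeal 𝒰 hgen hk
  have := hU.isPrime_infinitesimals
  have : IsLocalRing (Ultraproduct 𝒰 R ⧸ infinitesimals (Ultraproduct 𝒰 R)) :=
    .of_surjective' _ Ideal.Quotient.mk_surjective
  exact ⟨inferInstance, hU.quotient le_rfl, inferInstance⟩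

/-- The separated quotient of an ultraproduct of local rings of bounded
embedding dimension with `k`-bounded multiplication again has `k`-bounded
multiplication and is an integral domain. -/
theorem stmt_19 (k N : ℕ) {W : Type*} [Infinite W] (𝒰 : Ultrafilter W)
    (R : W → Type*) [∀ w, CommRing (R w)] [∀ w, IsLocalRing (R w)]
    (hgen : ∀ w, ∃ x : Fin N → R w,
      Ideal.span (Set.range x) = IsLocalRing.maximalIdeal (R w))
    (hk : ∀ w, KBoundedMul (IsLocalRing.maximalIdeal (R w)) k) :
    ∃ h : IsLocalRing (Ultraproduct 𝒰 R ⧸ infinitesimals (Ultraproduct 𝒰 R)),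
      KBoundedMul (@IsLocalRing.maximalIdeal _ _ h) k ∧
      IsDomain (Ultraproduct 𝒰 R ⧸ infinitesimals (Ultraproduct 𝒰 R)) :=
  stmt_19_general k N 𝒰 R hgen hk
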